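/- arXiv:1305.2285 — 5 statements merged into one kernel-verified Lean document; each statement's English description precedes it below -/
import Mathlib

section
/- The kernel of Φ is closed under the Lie bracket of R ⊗[K] L; that is, ker Φ is a Lie subalgebra over R of the base-changed Lie algebra R ⊗[K] L. -/
open TensorProduct

/-!
`Φ` fails to be a Lie homomorphism only by terms in which `Φ x` or `Φ y` acts on the scalar
factor `R` of the other argument, and these terms vanish on `ker Φ`.
-/

theorem Derivation.lie_smul_smul {R A : Type*} [CommRing R] [CommRing A] [Algebra R A]
    (r s : A) (D₁ D₂ : Derivation R A A) :
    ⁅r • D₁, s • D₂⁆ = (r * s) • ⁅D₁, D₂⁆ + (r * D₁ s) • D₂ - (s * D₂ r) • D₁ := by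
  ext a
  simp only [Derivation.commutator_apply, Derivation.smul_apply, Derivation.add_apply,
    Derivation.sub_apply, smul_eq_mul, Derivation.leibniz]
  ring

section

variable {K R L : Type*} [CommRing K] [CommRing R] [Algebra K R] [LieRing L] [LieAlgebra K L]
  {φ : L →ₗ⁅K⁆ Derivation K R R} {Φ : R ⊗[K] L →ₗ[R] Derivation K R R}

theorem map_lie_eq_lie_sub_add (hΦ : ∀ (r : R) (l : L), Φ (r ⊗ₜ[K] l) = r • φ l)
    (x y : R ⊗[K] L) :
    Φ ⁅x, y⁆ = ⁅Φ x, Φ y⁆ - Φ ((Φ x : R →ₗ[K] R).rTensor L y)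
      + Φ ((Φ y : R →ₗ[K] R).rTensor L x) := by
  induction x using TensorProduct.induction_on with
  | zero => simp
  | add x₁ x₂ h₁ h₂ =>
    rw [add_lie, map_add, h₁, h₂]
    simp only [map_add, Derivation.coe_add_linearMap, LinearMap.rTensor_add, LinearMap.add_apply,
      add_lie]
    abel
  | tmul r l =>
    induction y using TensorProduct.induction_on with
    | zero => simp
    | add y₁ y₂ h₁ h₂ =>
      rw [lie_add, map_add, h₁, h₂]
      simp only [map_add, Derivation.coe_add_linearMap, LinearMap.rTensor_add, LinearMap.add_apply,
        lie_add]
      abel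
    | tmul s m =>
      simp only [LieAlgebra.ExtendScalars.bracket_tmul, LinearMap.rTensor_tmul, hΦ,
        LieHom.map_lie, Derivation.lie_smul_smul, Derivation.coeFn_coe, Derivation.smul_apply,
        smul_eq_mul]
      abel

end

/-- The kernel of `Φ` is closed under the Lie bracket of `R ⊗[K] L`; that is, `ker Φ` is a Lie
subalgebra over `R` of the base-changed Lie algebra `R ⊗[K] L`.  Here `φ : L → Der_K(R)` is a
morphism of Lie algebras over `K` and `Φ : R ⊗[K] L →ₗ[R] Der_K(R)` is the `R`-linear map
determined by `Φ (r ⊗ l) = r • φ l`. -/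
theorem ker_of_tensor_lift_isLieSubalgebra
    (K R L : Type) [Field K] [CommRing R] [Algebra K R] [LieRing L] [LieAlgebra K L]
    (φ : L →ₗ⁅K⁆ Derivation K R R)
    (Φ : R ⊗[K] L →ₗ[R] Derivation K R R)
    (hΦ : ∀ (r : R) (l : L), Φ (r ⊗ₜ[K] l) = r • φ l) :
    ∀ x ∈ LinearMap.ker Φ, ∀ y ∈ LinearMap.ker Φ, ⁅x, y⁆ ∈ LinearMap.ker Φ := by
  intro x hx y hy
  rw [LinearMap.mem_ker] at hx hy ⊢
  rw [map_lie_eq_lie_sub_add hΦ, hx, hy]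
  simp
end

section
/- Suppose R is a field extension of K, φ is injective, and the R-linear span M of φ(L) in Der_K(R) has finite dimension k over R. Then M is closed under the Lie bracket of Der_K(R), ker Φ is a Lie subalgebra over R of R ⊗[K] L, and the R-codimension of ker Φ equals k, i.e., finrank_R((R ⊗[K] L) ⧸ ker Φ) = k. -/
/-!
Since derivations satisfy `⁅r • d, e⁆ = r • ⁅d, e⁆ - e r • d`, the `R`-span of a family of
derivations closed under the bracket is again closed under it. For the same reason `Φ` is a Lie
morphism up to correction terms `Φ (rTensor (Φ x) y)`, which vanish as soon as `x` or `y` lies in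
`ker Φ`. Finally the range of `Φ` is `M`, so `(R ⊗[K] L) ⧸ ker Φ ≃ M`.
-/

open TensorProduct

namespace Derivation

variable {K R : Type*} [CommRing K] [CommRing R] [Algebra K R]

theorem smul_lie_eq (r : R) (d e : Derivation K R R) : ⁅r • d, e⁆ = r • ⁅d, e⁆ - e r • d := by
  ext a
  simp only [commutator_apply, coe_smul, Pi.smul_apply, sub_apply, smul_eq_mul, leibniz]
  ring

theorem lie_smul_eq (r : R) (d e : Derivation K R R) : ⁅d, r • e⁆ = r • ⁅d, e⁆ + d r • e := by
  ext a
  simp only [commutator_apply, coe_smul, Pi.smul_apply, add_apply, smul_eq_mul, leibniz]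
  ring

theorem lie_mem_span {S : Set (Derivation K R R)}
    (hS : ∀ d ∈ S, ∀ e ∈ S, ⁅d, e⁆ ∈ Submodule.span R S) {d e : Derivation K R R}
    (hd : d ∈ Submodule.span R S) (he : e ∈ Submodule.span R S) :
    ⁅d, e⁆ ∈ Submodule.span R S := by
  induction hd, he using Submodule.span_induction₂ with
  | mem_mem d e hd he => exact hS d hd e he
  | zero_left e _ => simp
  | zero_right d _ => simp
  | add_left d₁ d₂ e _ _ _ h₁ h₂ => simpa only [add_lie] using add_mem h₁ h₂
  | add_right d e₁ e₂ _ _ _ h₁ h₂ => simpa only [lie_add] using add_mem h₁ h₂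
  | smul_left r d e hd _ h =>
    rw [smul_lie_eq]
    exact sub_mem (Submodule.smul_mem _ r h) (Submodule.smul_mem _ _ hd)
  | smul_right r d e _ he h =>
    rw [lie_smul_eq]
    exact add_mem (Submodule.smul_mem _ r h) (Submodule.smul_mem _ _ he)

theorem lie_mem_span_range {L : Type*} [LieRing L] [LieAlgebra K L]
    (φ : L →ₗ⁅K⁆ Derivation K R R) {d e : Derivation K R R}
    (hd : d ∈ Submodule.span R (Set.range φ)) (he : e ∈ Submodule.span R (Set.range φ)) :
    ⁅d, e⁆ ∈ Submodule.span R (Set.range φ) := by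
  refine lie_mem_span ?_ hd he
  rintro _ ⟨l, rfl⟩ _ ⟨m, rfl⟩
  exact Submodule.subset_span ⟨⁅l, m⁆, φ.map_lie l m⟩

end Derivation

theorem range_eq_span_range {K R L N : Type*} [CommSemiring K] [CommSemiring R] [Algebra K R]
    [AddCommMonoid L] [Module K L] [AddCommMonoid N] [Module R N] (φ : L → N)
    (Φ : R ⊗[K] L →ₗ[R] N) (hΦ : ∀ (r : R) (l : L), Φ (r ⊗ₜ[K] l) = r • φ l) :
    LinearMap.range Φ = Submodule.span R (Set.range φ) := by
  apply le_antisymm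
  · rintro _ ⟨x, rfl⟩
    induction x using TensorProduct.induction_on with
    | zero => simp
    | tmul r l => exact hΦ r l ▸ Submodule.smul_mem _ r (Submodule.subset_span ⟨l, rfl⟩)
    | add x y hx hy => simpa only [map_add] using add_mem hx hy
  · rw [Submodule.span_le]
    rintro _ ⟨l, rfl⟩
    exact ⟨1 ⊗ₜ l, by rw [hΦ, one_smul]⟩

section

variable {K R L : Type*} [CommRing K] [CommRing R] [Algebra K R] [LieRing L] [LieAlgebra K L]
  {φ : L →ₗ⁅K⁆ Derivation K R R} {Φ : R ⊗[K] L →ₗ[R] Derivation K R R}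

theorem map_lie_eq_lie_sub_rTensor_add_rTensor
    (hΦ : ∀ (r : R) (l : L), Φ (r ⊗ₜ[K] l) = r • φ l) (x y : R ⊗[K] L) :
    Φ ⁅x, y⁆ = ⁅Φ x, Φ y⁆ - Φ ((Φ x).toLinearMap.rTensor L y)
      + Φ ((Φ y).toLinearMap.rTensor L x) := by
  induction x using TensorProduct.induction_on with
  | zero => simp
  | tmul r l =>
    induction y using TensorProduct.induction_on with
    | zero => simp
    | tmul s m =>
      simp only [LieAlgebra.ExtendScalars.bracket_tmul, LinearMap.rTensor_tmul, hΦ,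
        Derivation.coeFn_coe, Derivation.coe_smul, Pi.smul_apply, smul_eq_mul, LieHom.map_lie,
        Derivation.smul_lie_eq, Derivation.lie_smul_eq]
      module
    | add y₁ y₂ hy₁ hy₂ =>
      simp only [lie_add, map_add, hy₁, hy₂, Derivation.coe_add_linearMap, LinearMap.rTensor_add,
        LinearMap.add_apply]
      abel
  | add x₁ x₂ hx₁ hx₂ =>
    simp only [add_lie, map_add, hx₁, hx₂, Derivation.coe_add_linearMap, LinearMap.rTensor_add,
      LinearMap.add_apply]
    abel

theorem lie_mem_ker (hΦ : ∀ (r : R) (l : L), Φ (r ⊗ₜ[K] l) = r • φ l) {x y : R ⊗[K] L}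
    (hx : x ∈ LinearMap.ker Φ) (hy : y ∈ LinearMap.ker Φ) : ⁅x, y⁆ ∈ LinearMap.ker Φ := by
  rw [LinearMap.mem_ker] at hx hy ⊢
  simp [map_lie_eq_lie_sub_rTensor_add_rTensor hΦ, hx, hy, Derivation.coe_zero_linearMap]

end

theorem codim_ker_eq_finrank_span_general
    (K R L : Type) [Field K] [Field R] [Algebra K R] [LieRing L] [LieAlgebra K L]
    (φ : L →ₗ⁅K⁆ Derivation K R R)
    (Φ : R ⊗[K] L →ₗ[R] Derivation K R R)
    (hΦ : ∀ (r : R) (l : L), Φ (r ⊗ₜ[K] l) = r • φ l)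
    (M : Submodule R (Derivation K R R))
    (hM : M = Submodule.span R (Set.range (φ : L → Derivation K R R)))
    (k : ℕ) (hk : Module.finrank R M = k) :
    (∀ d₁ ∈ M, ∀ d₂ ∈ M, ⁅d₁, d₂⁆ ∈ M) ∧
    (∀ x ∈ LinearMap.ker Φ, ∀ y ∈ LinearMap.ker Φ, ⁅x, y⁆ ∈ LinearMap.ker Φ) ∧
    Module.finrank R ((R ⊗[K] L) ⧸ LinearMap.ker Φ) = k := by
  subst hM hk
  refine ⟨fun _ hd _ he ↦ Derivation.lie_mem_span_range φ hd he,
    fun _ hx _ hy ↦ lie_mem_ker hΦ hx hy, ?_⟩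
  rw [Φ.quotKerEquivRange.finrank_eq, range_eq_span_range φ Φ hΦ]

/-- Suppose `R` is a field extension of `K`, `φ : L → Der_K(R)` is an injective morphism of Lie
algebras over `K`, and the `R`-linear span `M` of `φ(L)` in `Der_K(R)` has finite dimension `k`
over `R`.  Then `M` is closed under the Lie bracket of `Der_K(R)`, `ker Φ` is a Lie subalgebra
over `R` of `R ⊗[K] L`, and the `R`-codimension of `ker Φ` equals `k`, i.e.
`finrank_R ((R ⊗[K] L) ⧸ ker Φ) = k`.  Here `Φ : R ⊗[K] L →ₗ[R] Der_K(R)` is determined by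
`Φ (r ⊗ l) = r • φ l`. -/
theorem codim_ker_eq_finrank_span
    (K R L : Type) [Field K] [Field R] [Algebra K R] [LieRing L] [LieAlgebra K L]
    (φ : L →ₗ⁅K⁆ Derivation K R R) (hφ : Function.Injective φ)
    (Φ : R ⊗[K] L →ₗ[R] Derivation K R R)
    (hΦ : ∀ (r : R) (l : L), Φ (r ⊗ₜ[K] l) = r • φ l)
    (M : Submodule R (Derivation K R R))
    (hM : M = Submodule.span R (Set.range (φ : L → Derivation K R R)))
    (hfin : Module.Finite R M) (k : ℕ) (hk : Module.finrank R M = k) :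
    (∀ d₁ ∈ M, ∀ d₂ ∈ M, ⁅d₁, d₂⁆ ∈ M) ∧
    (∀ x ∈ LinearMap.ker Φ, ∀ y ∈ LinearMap.ker Φ, ⁅x, y⁆ ∈ LinearMap.ker Φ) ∧
    Module.finrank R ((R ⊗[K] L) ⧸ LinearMap.ker Φ) = k :=
  codim_ker_eq_finrank_span_general K R L φ Φ hΦ M hM k hk
end

section
/- Let k ≤ m = dim_K L. The following are equivalent: (a) there exists an injective homomorphism of Lie algebras over K, φ : L → Der_K(R), such that the R-linear span of φ(L) in Der_K(R) has dimension k over R; (b) there exist an R-Lie subalgebra L̂ of R ⊗[K] L with finrank_R((R ⊗[K] L) ⧸ L̂) = k and L̂ ∩ {1 ⊗ l : l ∈ L} = {0}, elements b̄₁, …, b̄_k ∈ R ⊗[K] L with L̂ + R·b̄₁ + ⋯ + R·b̄_k = R ⊗[K] L, and R-linearly independent derivations D₁, …, D_k ∈ Der_K(R), such that the R-submodule of 𝔇 spanned by (D₁, b̄₁), …, (D_k, b̄_k) together with {0} × L̂ is closed under the Lie bracket of 𝔇. -/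
open TensorProduct

/-- The Lie bracket of the semidirect product `𝔇 = Der_K(R) ⋉ (R ⊗[K] L)`:
`[(D, x), (D', x')] = ([D, D'], [x, x'] + D̃ x' - D̃' x)`, where `D̃` is the `K`-linear
endomorphism of `R ⊗[K] L` determined by `D̃ (r ⊗ l) = D r ⊗ l`. -/
noncomputable def semidirectBracket (K R L : Type) [Field K] [CommRing R] [Algebra K R]
    [LieRing L] [LieAlgebra K L]
    (p q : Derivation K R R × (R ⊗[K] L)) : Derivation K R R × (R ⊗[K] L) :=
  (⁅p.1, q.1⁆,
    ⁅p.2, q.2⁆ + LinearMap.rTensor L (p.1 : R →ₗ[K] R) q.2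
      - LinearMap.rTensor L (q.1 : R →ₗ[K] R) p.2)

/-!
An `R`-linear map `ψ : R ⊗[K] L → Der_K(R)` is the base change of a `K`-linear map
`φ : L → Der_K(R)`, and its graph `{(ψ x, x)}` is an `R`-submodule of `𝔇` which is closed under
the bracket exactly when `φ` is a Lie homomorphism. Given `φ`, take `L̂ = ker ψ`, an `R`-basis `Dᵢ`
of `R·φ(L)` and preimages `b̄ᵢ` of the `Dᵢ`: the `(Dᵢ, b̄ᵢ)` together with `{0} × L̂` span the graph.
Conversely the `b̄ᵢ` form a basis of `(R ⊗ L) / L̂`, so `b̄ᵢ ↦ Dᵢ`, `L̂ ↦ 0` defines `ψ`, whose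
graph is again that span; independence of the `Dᵢ` gives `ker ψ = L̂`. In both directions
`L̂ ∩ (1 ⊗ L) = 0` is injectivity of `φ`, and `R·φ(L) = range ψ ≅ (R ⊗ L) / L̂`.
-/

open Submodule LinearMap Module

namespace LinearMap

variable {R M V : Type*} [Semiring R] [AddCommMonoid M] [Module R M] [AddCommMonoid V] [Module R V]

theorem mem_range_prod_id_iff {ψ : M →ₗ[R] V} {p : V × M} :
    p ∈ range (ψ.prod LinearMap.id) ↔ ψ p.2 = p.1 :=
  ⟨by rintro ⟨x, rfl⟩; rfl, fun h => ⟨p.2, Prod.ext h rfl⟩⟩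

theorem span_range_union_image_eq_range_prod_id {ι : Type*} (ψ : M →ₗ[R] V) {N : Submodule R M}
    (hN : N ≤ ker ψ) {b : ι → M} (hb : N ⊔ span R (Set.range b) = ⊤) {D : ι → V}
    (hD : ∀ i, ψ (b i) = D i) :
    span R (Set.range (fun i => (D i, b i)) ∪ (fun x => ((0 : V), x)) '' N) =
      range (ψ.prod LinearMap.id) := by
  have hgen : Set.range (fun i => (D i, b i)) = ψ.prod LinearMap.id '' Set.range b := by
    rw [← Set.range_comp]; exact congrArg Set.range (funext fun i => by simp [hD])
  have hker : (fun x => ((0 : V), x)) '' N = ψ.prod LinearMap.id '' N :=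
    Set.image_congr fun x hx => by simp [mem_ker.1 (hN hx)]
  rw [hgen, hker, span_union, ← Submodule.map_span, ← Submodule.map_span, span_eq, sup_comm,
    ← Submodule.map_sup, hb, Submodule.map_top]

end LinearMap

section

variable {R M V : Type*} [Field R] [AddCommGroup M] [Module R M] [AddCommGroup V] [Module R V]

theorem LinearMap.exists_ker_sup_span_eq_top_linearIndependent (ψ : M →ₗ[R] V)
    [FiniteDimensional R (range ψ)] {k : ℕ} (hk : finrank R (range ψ) = k) :
    ∃ b : Fin k → M, ker ψ ⊔ span R (Set.range b) = ⊤ ∧ LinearIndependent R (ψ ∘ b) := by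
  let B := Module.finBasisOfFinrankEq R _ hk
  choose b hb using fun i => mem_range.1 (B i).2
  have hψb : ψ ∘ b = (range ψ).subtype ∘ B := funext hb
  refine ⟨b, ?_, hψb ▸ B.linearIndependent.map' _ (ker_subtype _)⟩
  rw [sup_comm, ← comap_map_eq, Submodule.map_span, ← Set.range_comp, hψb, Set.range_comp,
    ← Submodule.map_span, B.span_eq, map_subtype_top]
  exact eq_top_iff.2 fun x _ => mem_range_self ψ x

theorem Submodule.exists_linearMap_ker_eq_of_sup_span_eq_top (N : Submodule R M) {k : ℕ}
    {b : Fin k → M} (hb : N ⊔ span R (Set.range b) = ⊤) (hk : finrank R (M ⧸ N) = k) {D : Fin k → V}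
    (hD : LinearIndependent R D) : ∃ ψ : M →ₗ[R] V, ker ψ = N ∧ ∀ i, ψ (b i) = D i := by
  have hspan : ⊤ ≤ span R (Set.range (N.mkQ ∘ b)) := by
    rw [Set.range_comp, ← Submodule.map_span, (map_mkQ_eq_top _ _).2 hb]
  have hQ : LinearIndependent R (N.mkQ ∘ b) :=
    linearIndependent_of_top_le_span_of_card_eq_finrank hspan (by simp [hk])
  let e := (Basis.mk hQ hspan).equiv (Basis.span hD) (Equiv.refl _)
  refine ⟨(span R (Set.range D)).subtype ∘ₗ e.toLinearMap ∘ₗ N.mkQ, ?_, fun i => ?_⟩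
  · ext x; simp [Submodule.Quotient.mk_eq_zero]
  · have hbi : N.mkQ (b i) = Basis.mk hQ hspan i := by rw [Basis.mk_apply]; rfl
    simp only [e, coe_comp, Function.comp_apply, LinearEquiv.coe_coe, hbi, Basis.equiv_apply,
      Equiv.refl_apply, Basis.span_apply, coe_subtype]

end

theorem Derivation.smul_lie_smul {K R : Type*} [CommRing K] [CommRing R] [Algebra K R]
    (r s : R) (D E : Derivation K R R) :
    ⁅r • D, s • E⁆ = (r * s) • ⁅D, E⁆ + (r * D s) • E - (s * E r) • D := by
  ext a
  simp only [commutator_apply, smul_apply, leibniz, smul_eq_mul, add_apply, sub_apply]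
  ring

section BaseChange

variable {K R L : Type} [Field K] [CommRing R] [Algebra K R] [LieRing L] [LieAlgebra K L]

theorem liftBaseChange_semidirectBracket {φ : L →ₗ[K] Derivation K R R}
    (hφ : ∀ l l', φ ⁅l, l'⁆ = ⁅φ l, φ l'⁆) (x y : R ⊗[K] L) :
    φ.liftBaseChange R
        (semidirectBracket K R L (φ.liftBaseChange R x, x) (φ.liftBaseChange R y, y)).2 =
      ⁅φ.liftBaseChange R x, φ.liftBaseChange R y⁆ := by
  induction x using TensorProduct.induction_on with
  | zero => simp [semidirectBracket]
  | add x₁ x₂ h₁ h₂ =>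
    simp only [semidirectBracket, map_add, add_lie, Derivation.coe_add_linearMap,
      LinearMap.rTensor_add, LinearMap.add_apply, map_sub] at h₁ h₂ ⊢
    linear_combination (norm := abel) h₁ + h₂
  | tmul r l =>
    induction y using TensorProduct.induction_on with
    | zero => simp [semidirectBracket]
    | add y₁ y₂ h₁ h₂ =>
      simp only [semidirectBracket, map_add, lie_add, Derivation.coe_add_linearMap,
        LinearMap.rTensor_add, LinearMap.add_apply, map_sub] at h₁ h₂ ⊢
      linear_combination (norm := abel) h₁ + h₂
    | tmul s m =>
      rw [LinearMap.liftBaseChange_tmul, LinearMap.liftBaseChange_tmul, Derivation.smul_lie_smul]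
      simp [semidirectBracket, hφ]

theorem semidirectBracket_mem_range_prod_id_iff (φ : L →ₗ[K] Derivation K R R) :
    (∀ p ∈ range ((φ.liftBaseChange R).prod LinearMap.id),
      ∀ q ∈ range ((φ.liftBaseChange R).prod LinearMap.id),
        semidirectBracket K R L p q ∈ range ((φ.liftBaseChange R).prod LinearMap.id)) ↔
      ∀ l l', φ ⁅l, l'⁆ = ⁅φ l, φ l'⁆ := by
  constructor
  · intro h l l'
    simpa [semidirectBracket] using
      mem_range_prod_id_iff.1 (h _ ⟨1 ⊗ₜ l, rfl⟩ _ ⟨1 ⊗ₜ l', rfl⟩)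
  · rintro hφ _ ⟨x, rfl⟩ _ ⟨y, rfl⟩
    exact mem_range_prod_id_iff.2 (liftBaseChange_semidirectBracket hφ x y)

def LieHom.kerLiftBaseChange (φ : L →ₗ⁅K⁆ Derivation K R R) : LieSubalgebra R (R ⊗[K] L) where
  toSubmodule := LinearMap.ker ((φ : L →ₗ[K] Derivation K R R).liftBaseChange R)
  lie_mem' {x y} hx hy := by
    have h := liftBaseChange_semidirectBracket (φ := φ) (fun l l' => φ.map_lie l l') x y
    simp only [Submodule.mem_carrier, SetLike.mem_coe, LinearMap.mem_ker] at hx hy ⊢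
    simpa [semidirectBracket, hx, hy] using h

@[simp]
theorem LieHom.toSubmodule_kerLiftBaseChange (φ : L →ₗ⁅K⁆ Derivation K R R) :
    φ.kerLiftBaseChange.toSubmodule =
      LinearMap.ker ((φ : L →ₗ[K] Derivation K R R).liftBaseChange R) :=
  rfl

variable {V : Type*} [AddCommGroup V] [Module R V] [Module K V] [IsScalarTower K R V]

theorem finrank_span_range_eq_finrank_quotient_ker_liftBaseChange (φ : L →ₗ[K] V) :
    finrank R (span R (Set.range φ)) = finrank R ((R ⊗[K] L) ⧸ ker (φ.liftBaseChange R)) := by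
  rw [← LinearMap.coe_range, ← range_liftBaseChange]
  exact (φ.liftBaseChange R).quotKerEquivRange.finrank_eq.symm

theorem injective_iff_ker_liftBaseChange_inter_range_one_tmul [Nontrivial R] (φ : L →ₗ[K] V) :
    Function.Injective φ ↔
      (ker (φ.liftBaseChange R) : Set (R ⊗[K] L)) ∩ Set.range (fun l : L => (1 : R) ⊗ₜ[K] l) =
        {0} := by
  rw [injective_iff_map_eq_zero]
  constructor
  · intro h
    ext x
    simp only [Set.mem_inter_iff, SetLike.mem_coe, LinearMap.mem_ker, Set.mem_range,
      Set.mem_singleton_iff]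
    constructor
    · rintro ⟨hx, l, rfl⟩
      rw [liftBaseChange_one_tmul] at hx
      rw [h l hx, tmul_zero]
    · rintro rfl
      exact ⟨map_zero _, 0, tmul_zero _ _⟩
  · intro h l hl
    have hmem : (1 : R) ⊗ₜ[K] l ∈ (ker (φ.liftBaseChange R) : Set (R ⊗[K] L)) ∩
        Set.range (fun l : L => (1 : R) ⊗ₜ[K] l) := ⟨by simpa using hl, l, rfl⟩
    rw [h] at hmem
    exact Module.Flat.tensorProduct_mk_injective K L R (hmem.trans (tmul_zero L 1).symm)

end BaseChange

theorem injection_iff_subalgebra_conditions_general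
    (K R L : Type) [Field K] [Field R] [Algebra K R] [LieRing L] [LieAlgebra K L]
    [FiniteDimensional K L] (k : ℕ) :
    (∃ φ : L →ₗ⁅K⁆ Derivation K R R, Function.Injective φ ∧
      Module.finrank R (Submodule.span R (Set.range (φ : L → Derivation K R R))) = k) ↔
    (∃ Lhat : LieSubalgebra R (R ⊗[K] L),
      Module.finrank R ((R ⊗[K] L) ⧸ Lhat.toSubmodule) = k ∧
      (Lhat : Set (R ⊗[K] L)) ∩ Set.range (fun l : L => (1 : R) ⊗ₜ[K] l) = {0} ∧
      ∃ b : Fin k → R ⊗[K] L,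
        (Lhat.toSubmodule ⊔ Submodule.span R (Set.range b) = ⊤) ∧
        ∃ D : Fin k → Derivation K R R, LinearIndependent R D ∧
          (∀ p ∈ Submodule.span R
              (Set.range (fun i : Fin k => ((D i, b i) : Derivation K R R × (R ⊗[K] L))) ∪
                (fun x : R ⊗[K] L => ((0 : Derivation K R R), x)) '' (Lhat : Set (R ⊗[K] L))),
            ∀ q ∈ Submodule.span R
              (Set.range (fun i : Fin k => ((D i, b i) : Derivation K R R × (R ⊗[K] L))) ∪
                (fun x : R ⊗[K] L => ((0 : Derivation K R R), x)) '' (Lhat : Set (R ⊗[K] L))),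
            semidirectBracket K R L p q ∈ Submodule.span R
              (Set.range (fun i : Fin k => ((D i, b i) : Derivation K R R × (R ⊗[K] L))) ∪
                (fun x : R ⊗[K] L => ((0 : Derivation K R R), x)) '' (Lhat : Set (R ⊗[K] L))))) := by
  constructor
  · rintro ⟨φ, hinj, hrank⟩
    set ψ := (φ : L →ₗ[K] Derivation K R R).liftBaseChange R
    have hψ : finrank R (range ψ) = k := by
      rw [← hrank, range_liftBaseChange, LinearMap.coe_range]; rfl
    obtain ⟨b, hsup, hD⟩ := ψ.exists_ker_sup_span_eq_top_linearIndependent hψ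
    refine ⟨φ.kerLiftBaseChange, ?_⟩
    dsimp only [← LieSubalgebra.coe_toSubmodule, LieHom.toSubmodule_kerLiftBaseChange]
    refine ⟨?_, ?_, b, hsup, ψ ∘ b, hD, ?_⟩
    · exact hrank ▸ (finrank_span_range_eq_finrank_quotient_ker_liftBaseChange _).symm
    · exact (injective_iff_ker_liftBaseChange_inter_range_one_tmul _).1 hinj
    · rw [span_range_union_image_eq_range_prod_id ψ le_rfl hsup (D := ψ ∘ b) fun _ => rfl]
      exact (semidirectBracket_mem_range_prod_id_iff _).2 fun l l' => φ.map_lie l l'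
  · rintro ⟨Lhat, hcodim, hint, b, hsup, D, hD, hcl⟩
    obtain ⟨ψ, hker, hψb⟩ := Submodule.exists_linearMap_ker_eq_of_sup_span_eq_top _ hsup hcodim hD
    obtain ⟨φ, rfl⟩ := (LinearMap.liftBaseChangeEquiv R).surjective ψ
    rw [← LieSubalgebra.coe_toSubmodule, ← hker] at hint
    rw [← LieSubalgebra.coe_toSubmodule,
      span_range_union_image_eq_range_prod_id _ hker.ge hsup hψb] at hcl
    refine ⟨{ φ with map_lie' := (semidirectBracket_mem_range_prod_id_iff φ).1 hcl _ _ }, ?_, ?_⟩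
    · exact (injective_iff_ker_liftBaseChange_inter_range_one_tmul φ).2 hint
    · rw [← hcodim, ← hker]
      exact finrank_span_range_eq_finrank_quotient_ker_liftBaseChange φ

/-- Let `R` be a field extension of `K`, `L` a finite-dimensional Lie algebra over `K` of
dimension `m`, and `k ≤ m`.  Then there exists an injective homomorphism of Lie algebras over
`K`, `φ : L → Der_K(R)`, whose image has `R`-linear span of dimension `k` over `R`, if and only
if there exist an `R`-Lie subalgebra `L̂ ⊆ R ⊗[K] L` of `R`-codimension `k` with
`L̂ ∩ {1 ⊗ l : l ∈ L} = {0}`, elements `b̄₁, …, b̄ₖ ∈ R ⊗[K] L` with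
`L̂ + R b̄₁ + ⋯ + R b̄ₖ = R ⊗[K] L`, and `R`-linearly independent derivations `D₁, …, Dₖ` such
that the `R`-submodule of `𝔇` spanned by `(D₁, b̄₁), …, (Dₖ, b̄ₖ)` together with `{0} × L̂` is
closed under the Lie bracket of `𝔇`. -/
theorem injection_iff_subalgebra_conditions
    (K R L : Type) [Field K] [Field R] [Algebra K R] [LieRing L] [LieAlgebra K L]
    [FiniteDimensional K L] (m k : ℕ) (hm : Module.finrank K L = m) (hkm : k ≤ m) :
    (∃ φ : L →ₗ⁅K⁆ Derivation K R R, Function.Injective φ ∧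
      Module.finrank R (Submodule.span R (Set.range (φ : L → Derivation K R R))) = k) ↔
    (∃ Lhat : LieSubalgebra R (R ⊗[K] L),
      Module.finrank R ((R ⊗[K] L) ⧸ Lhat.toSubmodule) = k ∧
      (Lhat : Set (R ⊗[K] L)) ∩ Set.range (fun l : L => (1 : R) ⊗ₜ[K] l) = {0} ∧
      ∃ b : Fin k → R ⊗[K] L,
        (Lhat.toSubmodule ⊔ Submodule.span R (Set.range b) = ⊤) ∧
        ∃ D : Fin k → Derivation K R R, LinearIndependent R D ∧
          (∀ p ∈ Submodule.span R
              (Set.range (fun i : Fin k => ((D i, b i) : Derivation K R R × (R ⊗[K] L))) ∪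
                (fun x : R ⊗[K] L => ((0 : Derivation K R R), x)) '' (Lhat : Set (R ⊗[K] L))),
            ∀ q ∈ Submodule.span R
              (Set.range (fun i : Fin k => ((D i, b i) : Derivation K R R × (R ⊗[K] L))) ∪
                (fun x : R ⊗[K] L => ((0 : Derivation K R R), x)) '' (Lhat : Set (R ⊗[K] L))),
            semidirectBracket K R L p q ∈ Submodule.span R
              (Set.range (fun i : Fin k => ((D i, b i) : Derivation K R R × (R ⊗[K] L))) ∪
                (fun x : R ⊗[K] L => ((0 : Derivation K R R), x)) '' (Lhat : Set (R ⊗[K] L))))) :=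
  injection_iff_subalgebra_conditions_general K R L k
end

section
/- Let K be an algebraically closed field, L a finite-dimensional Lie algebra over K, R a field extension of K, and φ : L → Der_K(R) an injective homomorphism of Lie algebras over K such that the R-linear span of φ(L) in Der_K(R) has finite dimension k over R. Then L has a Lie subalgebra L₁ of codimension k over K, i.e., with finrank_K(L ⧸ L₁) = k. -/
/-!
Choose `e₁, …, e_k ∈ L` whose images form an `R`-basis of the span of `φ(L)` and write
`φ x = ∑ cᵢ(x) • φ(eᵢ)`. Expanding `φ⁅x, y⁆ = ⁅φ x, φ y⁆` in this basis expresses each `c_l⁅x, y⁆`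
as a polynomial in the coordinates all of whose terms contain a factor `cᵢ(x)` or `cⱼ(y)`. The
coordinates generate a finitely generated `K`-subalgebra of `R`, which has a `K`-point `σ` by the
Nullstellensatz. Hence `{x | σ(cᵢ(x)) = 0 for all i}` is a Lie subalgebra, and its codimension is
`k` because `x ↦ (σ(cᵢ(x)))ᵢ` sends `eⱼ` to the `j`-th unit vector.
-/

open Module Submodule

lemma Derivation.smul_lie {K R : Type*} [CommRing K] [CommRing R] [Algebra K R] (a : R)
    (D₁ D₂ : Derivation K R R) : ⁅a • D₁, D₂⁆ = a • ⁅D₁, D₂⁆ - D₂ a • D₁ := by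
  ext s
  simp only [commutator_apply, smul_apply, sub_apply, leibniz, smul_eq_mul]
  ring

lemma Module.Basis.exists_fin_mem_of_span {R M : Type*} [DivisionRing R] [AddCommGroup M]
    [Module R M] (s : Set M) [Module.Finite R (span R s)] :
    ∃ b : Basis (Fin (finrank R (span R s))) R (span R s), ∀ i, (b i : M) ∈ s := by
  let b₀ := Basis.ofSpan (span_setOfPred_mem_eq_top (R := R) (s := s)).ge
  have hb₀ (j) : b₀ j ∈ {x : span R s | (x : M) ∈ s} :=
    Basis.ofSpan_subset _ (Set.mem_range_self j)
  exact ⟨b₀.reindex (b₀.indexEquiv (finBasis R (span R s))), fun i => by simpa using hb₀ _⟩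

lemma IsAlgClosed.nonempty_algHom_of_finiteType (K A : Type*) [Field K] [IsAlgClosed K]
    [CommRing A] [Nontrivial A] [Algebra K A] [Algebra.FiniteType K A] :
    Nonempty (A →ₐ[K] K) := by
  obtain ⟨m, hm⟩ := Ideal.exists_maximal A
  let := Ideal.Quotient.field m
  have : Module.Finite K (A ⧸ m) := finite_of_finite_type_of_isJacobsonRing K _
  exact ⟨IsAlgClosed.lift.comp (Ideal.Quotient.mkₐ K m)⟩

namespace LieHom

section CommRing

variable {K R L ι : Type*} [CommRing K] [CommRing R] [Algebra K R] [LieRing L] [LieAlgebra K L]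
  (φ : L →ₗ⁅K⁆ Derivation K R R)

section Basis

variable (b : Basis ι R (span R (Set.range φ)))

noncomputable def spanCoord (i : ι) : L →ₗ[K] R :=
  (b.coord i).restrictScalars K ∘ₗ
    LinearMap.codRestrict ((span R (Set.range φ)).restrictScalars K) φ.toLinearMap
      fun x => subset_span (Set.mem_range_self x)

lemma spanCoord_apply (i : ι) (x : L) :
    φ.spanCoord b i x = b.repr ⟨φ x, subset_span (Set.mem_range_self x)⟩ i := rfl

def spanCoordSubalgebra : Subalgebra K R :=
  Algebra.adjoin K (Set.range fun p : ι × L => φ.spanCoord b p.1 p.2)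

lemma spanCoord_mem_spanCoordSubalgebra (i : ι) (x : L) :
    φ.spanCoord b i x ∈ φ.spanCoordSubalgebra b :=
  Algebra.subset_adjoin ⟨(i, x), rfl⟩

lemma spanCoordSubalgebra_fg [Finite ι] [Module.Finite K L] : (φ.spanCoordSubalgebra b).FG := by
  obtain ⟨n, s, hs⟩ := Module.Finite.exists_fin (R := K) (M := L)
  let T := Set.range fun p : ι × Fin n => φ.spanCoord b p.1 (s p.2)
  refine ⟨(Set.toFinite T).toFinset, le_antisymm ?_ ?_⟩
  · rw [Set.Finite.coe_toFinset]
    exact Algebra.adjoin_mono fun _ ⟨p, hp⟩ => ⟨(p.1, s p.2), hp⟩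
  · rw [Set.Finite.coe_toFinset, spanCoordSubalgebra, Algebra.adjoin_le_iff]
    rintro _ ⟨⟨i, x⟩, rfl⟩
    have hx : φ.spanCoord b i x ∈ (span K (Set.range s)).map (φ.spanCoord b i) :=
      mem_map_of_mem (hs ▸ mem_top)
    rw [map_span, ← Set.range_comp] at hx
    have hT : Set.range (φ.spanCoord b i ∘ s) ⊆ T := Set.range_subset_iff.2 fun j => ⟨(i, j), rfl⟩
    exact Algebra.span_le_adjoin K T (span_mono hT hx)

variable [Fintype ι]

lemma sum_spanCoord_smul (x : L) :
    ∑ i, φ.spanCoord b i x • (b i : Derivation K R R) = φ x := by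
  have h := congrArg Subtype.val (b.sum_repr ⟨φ x, subset_span (Set.mem_range_self x)⟩)
  simp only [coe_sum, SetLike.val_smul] at h
  exact h

lemma apply_eq_sum_spanCoord_mul (x : L) (r : R) :
    φ x r = ∑ i, φ.spanCoord b i x * (b i : Derivation K R R) r := by
  conv_lhs => rw [← φ.sum_spanCoord_smul b x]
  change Derivation.coeFnAddMonoidHom (∑ i, _) r = _
  simp [map_sum, Finset.sum_apply, Derivation.coeFnAddMonoidHom_apply]

lemma spanCoord_eq_of_eq_sum {x : L} {a : ι → R} (h : φ x = ∑ i, a i • (b i : Derivation K R R))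
    (i : ι) : φ.spanCoord b i x = a i := by
  have hx : (⟨φ x, subset_span (Set.mem_range_self x)⟩ : span R (Set.range φ)) = ∑ i, a i • b i :=
    Subtype.ext (by simpa using h)
  rw [spanCoord_apply, hx, b.repr_sum_self]

end Basis

variable {b : Basis ι R (span R (Set.range φ))} {e : ι → L}

lemma spanCoord_self [DecidableEq ι] (he : ∀ i, φ (e i) = b i) (i j : ι) :
    φ.spanCoord b i (e j) = if j = i then 1 else 0 := by
  have h : (⟨φ (e j), subset_span (Set.mem_range_self _)⟩ : span R (Set.range φ)) = b j :=
    Subtype.ext (he j)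
  rw [spanCoord_apply, h, b.repr_self, Finsupp.single_apply]

section Fintype

variable [Fintype ι]

lemma spanCoord_lie (he : ∀ i, φ (e i) = b i) (x y : L) (l : ι) :
    φ.spanCoord b l ⁅x, y⁆ =
      ∑ i, φ.spanCoord b i x * φ.spanCoord b l ⁅e i, y⁆ - φ y (φ.spanCoord b l x) := by
  have hx : φ x = ∑ i, φ.spanCoord b i x • φ (e i) := by
    simp only [he, sum_spanCoord_smul]
  apply spanCoord_eq_of_eq_sum
  calc φ ⁅x, y⁆
      = ∑ i, (φ.spanCoord b i x • φ ⁅e i, y⁆ - φ y (φ.spanCoord b i x) • φ (e i)) := by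
        rw [LieHom.map_lie, hx, sum_lie]
        simp only [Derivation.smul_lie, LieHom.map_lie]
    _ = _ := by
        simp only [he, ← φ.sum_spanCoord_smul b ⁅e _, y⁆, Finset.smul_sum, smul_smul,
          Finset.sum_sub_distrib, sub_smul, Finset.sum_smul]
        rw [Finset.sum_comm]

lemma spanCoord_lie_eq_sum (he : ∀ i, φ (e i) = b i) (x y : L) (l : ι) :
    φ.spanCoord b l ⁅x, y⁆ = ∑ i, φ.spanCoord b i x * φ.spanCoord b l ⁅e i, y⁆ -
      ∑ j, φ.spanCoord b j y *
        (∑ i, φ.spanCoord b i x * φ.spanCoord b l ⁅e i, e j⁆ - φ.spanCoord b l ⁅x, e j⁆) := by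
  rw [φ.spanCoord_lie he x y l, φ.apply_eq_sum_spanCoord_mul b y]
  congr 1
  refine Finset.sum_congr rfl fun j _ => ?_
  rw [← he, φ.spanCoord_lie he x (e j) l]
  ring

end Fintype

variable (σ : φ.spanCoordSubalgebra b →ₐ[K] K)

noncomputable def evalSpanCoord : L →ₗ[K] ι → K :=
  LinearMap.pi fun i => σ.toLinearMap ∘ₗ
    LinearMap.codRestrict (φ.spanCoordSubalgebra b).toSubmodule (φ.spanCoord b i)
      (φ.spanCoord_mem_spanCoordSubalgebra b i)

lemma evalSpanCoord_apply (x : L) (i : ι) :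
    φ.evalSpanCoord σ x i = σ ⟨φ.spanCoord b i x, φ.spanCoord_mem_spanCoordSubalgebra b i x⟩ :=
  rfl

lemma evalSpanCoord_self [DecidableEq ι] (he : ∀ i, φ (e i) = b i) (j : ι) :
    φ.evalSpanCoord σ (e j) = Pi.single j 1 := by
  ext i
  have h : (⟨φ.spanCoord b i (e j), φ.spanCoord_mem_spanCoordSubalgebra b i (e j)⟩ :
      φ.spanCoordSubalgebra b) = algebraMap K _ ((Pi.single j 1 : ι → K) i) := by
    apply Subtype.ext
    change φ.spanCoord b i (e j) = _
    rw [spanCoord_self φ he]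
    by_cases hij : i = j
    · subst hij; simp
    · simp [hij, Ne.symm hij]
  rw [evalSpanCoord_apply, h, σ.commutes, Algebra.algebraMap_self_apply]

lemma evalSpanCoord_surjective [Fintype ι] (he : ∀ i, φ (e i) = b i) :
    Function.Surjective (φ.evalSpanCoord σ) := by
  classical
  intro v
  refine ⟨∑ j, v j • e j, ?_⟩
  ext i
  simp [map_sum, evalSpanCoord_self φ σ he, Pi.single_apply]

lemma lie_mem_ker_evalSpanCoord [Fintype ι] (he : ∀ i, φ (e i) = b i) {x y : L}
    (hx : x ∈ LinearMap.ker (φ.evalSpanCoord σ)) (hy : y ∈ LinearMap.ker (φ.evalSpanCoord σ)) :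
    ⁅x, y⁆ ∈ LinearMap.ker (φ.evalSpanCoord σ) := by
  let c (i : ι) (z : L) : φ.spanCoordSubalgebra b :=
    ⟨φ.spanCoord b i z, φ.spanCoord_mem_spanCoordSubalgebra b i z⟩
  have hx' (i : ι) : σ (c i x) = 0 := congrFun hx i
  have hy' (i : ι) : σ (c i y) = 0 := congrFun hy i
  ext l
  have key : c l ⁅x, y⁆ = ∑ i, c i x * c l ⁅e i, y⁆ -
      ∑ j, c j y * (∑ i, c i x * c l ⁅e i, e j⁆ - c l ⁅x, e j⁆) :=
    Subtype.ext (by simpa [c] using φ.spanCoord_lie_eq_sum he x y l)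
  change σ (c l ⁅x, y⁆) = 0
  simp [key, hx', hy']

end CommRing

theorem exists_lieSubalgebra_finrank_quotient_eq_card {K R L ι : Type*} [Field K] [CommRing R]
    [Algebra K R] [LieRing L] [LieAlgebra K L] [Fintype ι] {φ : L →ₗ⁅K⁆ Derivation K R R}
    {b : Basis ι R (span R (Set.range φ))} {e : ι → L} (he : ∀ i, φ (e i) = b i)
    (σ : φ.spanCoordSubalgebra b →ₐ[K] K) :
    ∃ L₁ : LieSubalgebra K L, finrank K (L ⧸ L₁.toSubmodule) = Fintype.card ι := by
  refine ⟨{ toSubmodule := LinearMap.ker (φ.evalSpanCoord σ)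
            lie_mem' := φ.lie_mem_ker_evalSpanCoord σ he }, ?_⟩
  exact (LinearMap.quotKerEquivOfSurjective _ (φ.evalSpanCoord_surjective σ he)).finrank_eq.trans
    (finrank_fintype_fun_eq_card K)

end LieHom

theorem exists_lieSubalgebra_of_codim_of_injection_general
    (K R L : Type) [Field K] [IsAlgClosed K] [Field R] [Algebra K R]
    [LieRing L] [LieAlgebra K L] [FiniteDimensional K L]
    (φ : L →ₗ⁅K⁆ Derivation K R R) (k : ℕ)
    (hfin : Module.Finite R (Submodule.span R (Set.range (φ : L → Derivation K R R))))
    (hk : Module.finrank R (Submodule.span R (Set.range (φ : L → Derivation K R R))) = k) :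
    ∃ L₁ : LieSubalgebra K L, Module.finrank K (L ⧸ L₁.toSubmodule) = k := by
  obtain ⟨b, hb⟩ := Basis.exists_fin_mem_of_span (R := R) (Set.range φ)
  choose e he using hb
  have := (Subalgebra.fg_iff_finiteType _).mp (φ.spanCoordSubalgebra_fg b)
  obtain ⟨σ⟩ := IsAlgClosed.nonempty_algHom_of_finiteType K (φ.spanCoordSubalgebra b)
  simpa [hk] using LieHom.exists_lieSubalgebra_finrank_quotient_eq_card he σ

/-- Let `K` be an algebraically closed field, `L` a finite-dimensional Lie algebra over `K`, `R`
a field extension of `K`, and `φ : L → Der_K(R)` an injective homomorphism of Lie algebras over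
`K` such that the `R`-linear span of `φ(L)` in `Der_K(R)` has finite dimension `k` over `R`.
Then `L` has a Lie subalgebra `L₁` of codimension `k` over `K`. -/
theorem exists_lieSubalgebra_of_codim_of_injection
    (K R L : Type) [Field K] [IsAlgClosed K] [Field R] [Algebra K R]
    [LieRing L] [LieAlgebra K L] [FiniteDimensional K L]
    (φ : L →ₗ⁅K⁆ Derivation K R R) (hφ : Function.Injective φ) (k : ℕ)
    (hfin : Module.Finite R (Submodule.span R (Set.range (φ : L → Derivation K R R))))
    (hk : Module.finrank R (Submodule.span R (Set.range (φ : L → Derivation K R R))) = k) :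
    ∃ L₁ : LieSubalgebra K L, Module.finrank K (L ⧸ L₁.toSubmodule) = k :=
  exists_lieSubalgebra_of_codim_of_injection_general K R L φ k hfin hk
end

section
/- Let K be a field of characteristic 0 and n ≥ 2. Let F be the field of rational functions K(x₁, …, x_{n−1}), i.e., FractionRing (MvPolynomial (Fin (n−1)) K). Then there exists an injective homomorphism of Lie algebras over K from sl_n(K), the Lie algebra of n × n matrices over K of trace zero, into Der_K(F); moreover it can be chosen so that the F-linear span of its image in Der_K(F) has dimension n − 1 over F. -/
/-!
`gl_{m+1}(K)` acts on `ℙᵐ` by fractional linear transformations. In the chart `x₀ = 1` a matrix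
`A` becomes the polynomial vector field `D_A = ∑ⱼ (xⱼ ℓ₀ - ℓⱼ₊₁) ∂ⱼ`, where
`ℓ = A (1, x₁, …, xₘ)`, and `A ↦ D_A` is a Lie algebra homomorphism into `Der_K K[x]`.
Evaluating `D_A(xⱼ) = 0` at points shows its kernel consists of the scalar matrices, which meet
`sl_{m+1}(K)` trivially in characteristic zero. Since `K(x)` is formally étale over `K[x]`,
derivations of `K[x]` extend uniquely to `K(x)`, which gives the injection. Its image lies in the
`K(x)`-span of the `∂ⱼ`, which are linearly independent and equal to `D_{-E_{j+1,0}}`, so the span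
has dimension `m`.
-/

open MvPolynomial Matrix

theorem Derivation.sum_apply {R A M ι : Type*} [CommSemiring R] [CommSemiring A] [Algebra R A]
    [AddCommMonoid M] [Module A M] [Module R M] (s : Finset ι) (D : ι → Derivation R A M)
    (a : A) : (∑ i ∈ s, D i) a = ∑ i ∈ s, D i a := by
  rw [← coeFnAddMonoidHom_apply, map_sum, Finset.sum_apply]
  rfl

theorem MvPolynomial.derivation_mulVec_map_C {K σ ι κ : Type*} [CommSemiring K] [Fintype κ]
    (D : Derivation K (MvPolynomial σ K) (MvPolynomial σ K)) (M : Matrix ι κ K)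
    (v : κ → MvPolynomial σ K) (i : ι) :
    D ((M.map C *ᵥ v) i) = (M.map C *ᵥ fun k => D (v k)) i := by
  simp [mulVec, dotProduct]

theorem MvPolynomial.derivation_eq_sum_smul_pderiv {K σ : Type*} [CommSemiring K] [Fintype σ]
    (D : Derivation K (MvPolynomial σ K) (MvPolynomial σ K)) :
    D = ∑ i, D (X i) • pderiv i := by
  classical
  refine derivation_ext fun j => ?_
  simp [Derivation.sum_apply, pderiv_X, Pi.single_apply]

theorem Matrix.mulVec_vecCons_one_apply {K : Type*} [CommRing K] {m : ℕ}
    (A : Matrix (Fin (m + 1)) (Fin (m + 1)) K) (v : Fin m → K) (k : Fin (m + 1)) :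
    (A *ᵥ vecCons 1 v) k = A k 0 + ∑ i, A k i.succ * v i := by
  simp [mulVec, dotProduct, Fin.sum_univ_succ]

theorem Matrix.eq_scalar_of_forall_mulVec_vecCons_one {K : Type*} [CommRing K] [IsDomain K]
    [NeZero (2 : K)] {m : ℕ} (A : Matrix (Fin (m + 1)) (Fin (m + 1)) K)
    (h : ∀ (v : Fin m → K) (j : Fin m),
      (A *ᵥ vecCons 1 v) j.succ = v j * (A *ᵥ vecCons 1 v) 0) :
    A = scalar (Fin (m + 1)) (A 0 0) := by
  simp only [mulVec_vecCons_one_apply] at h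
  have col_zero (j : Fin m) : A j.succ 0 = 0 := by simpa using h 0 j
  have on_axis (i j : Fin m) (t : K) :
      A j.succ i.succ * t = if j = i then t * (A 0 0 + A 0 i.succ * t) else 0 := by
    simpa [col_zero, Pi.single_apply, mul_ite, ite_mul, eq_comm] using h (Pi.single i t) j
  have row_zero (i : Fin m) : A 0 i.succ = 0 := by
    have h1 := on_axis i i 1
    have h2 := on_axis i i 2
    simp only [if_true, mul_one, one_mul] at h1 h2
    have : (2 : K) * A 0 i.succ = 0 := by linear_combination 2 * h1 - h2
    exact (mul_eq_zero.mp this).resolve_left two_ne_zero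
  ext k l
  induction k using Fin.cases with
  | zero => induction l using Fin.cases with
    | zero => simp
    | succ i => simp [row_zero, scalar_apply, (Fin.succ_ne_zero i).symm]
  | succ j => induction l using Fin.cases with
    | zero => simp [col_zero, scalar_apply]
    | succ i => simpa [row_zero, scalar_apply, diagonal_apply] using on_axis i j 1

section FormallyEtale

variable {K R F : Type*} [CommRing K] [CommRing R] [CommRing F] [Algebra K R] [Algebra K F]
  [Algebra R F] [IsScalarTower K R F] [Algebra.FormallyEtale R F]

namespace Derivation

/- `Ω[F⁄K] ≅ F ⊗[R] Ω[R⁄K]` for formally étale `R → F`, so `F`-linear maps out of `Ω[F⁄K]`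
are `R`-linear maps out of `Ω[R⁄K]`. -/
theorem compAlgebraMap_bijective_of_formallyEtale :
    Function.Bijective (compAlgebraMap R : Derivation K F F → Derivation K R F) := by
  let e : Derivation K F F ≃ Derivation K R F :=
    (KaehlerDifferential.linearMapEquivDerivation K F).symm.toEquiv.trans <|
      ((KaehlerDifferential.tensorKaehlerEquivOfFormallyEtale K R F).arrowCongr
        (LinearEquiv.refl F F)).symm.toEquiv.trans <|
      (LinearMap.liftBaseChangeEquiv F).symm.toEquiv.trans
        (KaehlerDifferential.linearMapEquivDerivation K R).toEquiv
  convert e.bijective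
  ext D r
  simp [e]

theorem ext_of_formallyEtale {D D' : Derivation K F F}
    (h : ∀ r : R, D (algebraMap R F r) = D' (algebraMap R F r)) : D = D' :=
  compAlgebraMap_bijective_of_formallyEtale.injective (Derivation.ext h)

noncomputable def liftOfFormallyEtale (d : Derivation K R F) : Derivation K F F :=
  (Equiv.ofBijective _ compAlgebraMap_bijective_of_formallyEtale).symm d

@[simp]
theorem liftOfFormallyEtale_algebraMap (d : Derivation K R F) (r : R) :
    liftOfFormallyEtale d (algebraMap R F r) = d r :=
  congrArg (· r)
    ((Equiv.ofBijective _ compAlgebraMap_bijective_of_formallyEtale).apply_symm_apply d)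

variable (F) in
noncomputable def extendLieHom : Derivation K R R →ₗ⁅K⁆ Derivation K F F where
  toFun d := liftOfFormallyEtale ((Algebra.linearMap R F).compDer d)
  map_add' d d' := ext_of_formallyEtale (R := R) fun r => by simp
  map_smul' k d := ext_of_formallyEtale (R := R) fun r => by simp
  map_lie' {d d'} := ext_of_formallyEtale (R := R) fun r => by
    simp [-commutator_coe_linear_map, commutator_apply]

@[simp]
theorem extendLieHom_algebraMap (d : Derivation K R R) (r : R) :
    extendLieHom F d (algebraMap R F r) = algebraMap R F (d r) :=
  liftOfFormallyEtale_algebraMap ((Algebra.linearMap R F).compDer d) r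

theorem extendLieHom_smul (r : R) (d : Derivation K R R) :
    extendLieHom F (r • d) = algebraMap R F r • extendLieHom F d :=
  ext_of_formallyEtale (R := R) fun r' => by simp [Algebra.smul_def]

end Derivation

end FormallyEtale

section ProjectiveVectorField

variable {K : Type*} [CommRing K] {m : ℕ}

noncomputable def chartCoords : Fin (m + 1) → MvPolynomial (Fin m) K := vecCons 1 X

noncomputable def linearForms (A : Matrix (Fin (m + 1)) (Fin (m + 1)) K) :
    Fin (m + 1) → MvPolynomial (Fin m) K :=
  A.map C *ᵥ chartCoords

/- `-D_A` is the vector field generated by `x ↦ (g x̃)ⱼ₊₁ / (g x̃)₀` with `g = 1 + tA`; this sign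
makes `A ↦ D_A` a homomorphism rather than an anti-homomorphism. -/
noncomputable def projectiveField (A : Matrix (Fin (m + 1)) (Fin (m + 1)) K) (j : Fin m) :
    MvPolynomial (Fin m) K :=
  X j * linearForms A 0 - linearForms A j.succ

noncomputable def projectiveDerivation (A : Matrix (Fin (m + 1)) (Fin (m + 1)) K) :
    Derivation K (MvPolynomial (Fin m) K) (MvPolynomial (Fin m) K) :=
  mkDerivation K (projectiveField A)

@[simp]
theorem projectiveDerivation_X (A : Matrix (Fin (m + 1)) (Fin (m + 1)) K) (j : Fin m) :
    projectiveDerivation A (X j) = projectiveField A j :=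
  mkDerivation_X _ _ _

theorem linearForms_add (A B : Matrix (Fin (m + 1)) (Fin (m + 1)) K) :
    linearForms (A + B) = linearForms A + linearForms B := by
  simp [linearForms, Matrix.map_add, add_mulVec]

theorem linearForms_sub (A B : Matrix (Fin (m + 1)) (Fin (m + 1)) K) :
    linearForms (A - B) = linearForms A - linearForms B := by
  simp [linearForms, Matrix.map_sub, sub_mulVec]

theorem linearForms_smul (c : K) (A : Matrix (Fin (m + 1)) (Fin (m + 1)) K) :
    linearForms (c • A) = c • linearForms A := by
  ext k
  simp [linearForms, mulVec, dotProduct, Finset.smul_sum, smul_eq_C_mul, mul_assoc]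

theorem projectiveDerivation_chartCoords (A : Matrix (Fin (m + 1)) (Fin (m + 1)) K) :
    (fun l => projectiveDerivation A (chartCoords l)) =
      linearForms A 0 • chartCoords - linearForms A := by
  ext l
  induction l using Fin.cases with
  | zero => simp [chartCoords]
  | succ i => simp [chartCoords, projectiveField, mul_comm]

theorem projectiveDerivation_linearForms (A B : Matrix (Fin (m + 1)) (Fin (m + 1)) K)
    (k : Fin (m + 1)) :
    projectiveDerivation A (linearForms B k) =
      linearForms B k * linearForms A 0 - linearForms (B * A) k := by
  rw [linearForms, derivation_mulVec_map_C, projectiveDerivation_chartCoords]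
  simp [linearForms, mulVec_sub, mulVec_smul, mulVec_mulVec, Matrix.map_mul, mul_comm]

theorem projectiveDerivation_lie (A B : Matrix (Fin (m + 1)) (Fin (m + 1)) K) :
    ⁅projectiveDerivation A, projectiveDerivation B⁆ = projectiveDerivation (A * B - B * A) := by
  refine derivation_ext fun j => ?_
  simp only [Derivation.commutator_apply, projectiveDerivation_X, projectiveField, map_sub,
    Derivation.leibniz, smul_eq_mul, projectiveDerivation_linearForms, linearForms_sub,
    Pi.sub_apply]
  ring

theorem aeval_linearForms (v : Fin m → K) (A : Matrix (Fin (m + 1)) (Fin (m + 1)) K)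
    (k : Fin (m + 1)) :
    aeval v (linearForms A k) = (A *ᵥ vecCons 1 v) k := by
  simp [linearForms, chartCoords, mulVec, dotProduct, Fin.sum_univ_succ]

theorem eq_scalar_of_projectiveField_eq_zero [IsDomain K] [NeZero (2 : K)]
    {A : Matrix (Fin (m + 1)) (Fin (m + 1)) K} (h : ∀ j, projectiveField A j = 0) :
    A = scalar (Fin (m + 1)) (A 0 0) := by
  refine A.eq_scalar_of_forall_mulVec_vecCons_one fun v j => ?_
  have := congrArg (aeval v) (h j)
  simp only [projectiveField, map_sub, map_mul, aeval_X, aeval_linearForms, map_zero] at this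
  linear_combination -this

theorem projectiveDerivation_single_succ_zero (i : Fin m) :
    projectiveDerivation (single i.succ 0 (-1 : K)) = pderiv i := by
  classical
  refine derivation_ext fun j => ?_
  by_cases hji : j = i <;>
    simp [hji, projectiveField, linearForms, Matrix.map_single, single_mulVec, chartCoords,
      pderiv_X, (Fin.succ_ne_zero i).symm]

attribute [local instance] LieRing.ofAssociativeRing

variable (K m) in
noncomputable def projectiveLieHom :
    Matrix (Fin (m + 1)) (Fin (m + 1)) K →ₗ⁅K⁆
      Derivation K (MvPolynomial (Fin m) K) (MvPolynomial (Fin m) K) where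
  toFun := projectiveDerivation
  map_add' A B := derivation_ext fun j => by
    simp [projectiveField, linearForms_add]; ring
  map_smul' c A := derivation_ext fun j => by
    simp [projectiveField, linearForms_smul, smul_sub]
  map_lie' {A B} := (projectiveDerivation_lie A B).symm

end ProjectiveVectorField

section FractionField

variable (K : Type*) [Field K] (m : ℕ)

local notation "𝔽" => FractionRing (MvPolynomial (Fin m) K)

attribute [local instance] LieRing.ofAssociativeRing

noncomputable def slToDerivation :
    LieAlgebra.SpecialLinear.sl (Fin (m + 1)) K →ₗ⁅K⁆ Derivation K 𝔽 𝔽 :=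
  (Derivation.extendLieHom 𝔽).comp
    ((projectiveLieHom K m).comp (LieAlgebra.SpecialLinear.sl (Fin (m + 1)) K).incl)

theorem slToDerivation_algebraMap (A : LieAlgebra.SpecialLinear.sl (Fin (m + 1)) K)
    (r : MvPolynomial (Fin m) K) :
    slToDerivation K m A (algebraMap _ 𝔽 r) = algebraMap _ 𝔽 (projectiveDerivation A.1 r) :=
  Derivation.extendLieHom_algebraMap _ r

theorem slToDerivation_injective [CharZero K] : Function.Injective (slToDerivation K m) := by
  refine (injective_iff_map_eq_zero _).mpr fun A hA => ?_
  have hfield (j : Fin m) : projectiveField A.1 j = 0 := by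
    have := slToDerivation_algebraMap K m A (X j)
    rw [hA, projectiveDerivation_X] at this
    exact IsFractionRing.injective _ 𝔽 (by simpa using this.symm)
  have hscalar := eq_scalar_of_projectiveField_eq_zero hfield
  have hc : A.1 0 0 = 0 := by
    have htrace : A.1.trace = 0 := A.2
    rw [hscalar] at htrace
    simpa [scalar_apply, Nat.cast_add_one_ne_zero] using htrace
  ext : 1
  rw [hscalar, hc]
  simp

theorem linearIndependent_extendLieHom_pderiv :
    LinearIndependent 𝔽 fun j : Fin m =>
      Derivation.extendLieHom 𝔽 (pderiv j : Derivation K (MvPolynomial (Fin m) K) _) := by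
  classical
  refine Fintype.linearIndependent_iff.mpr fun c hc i => ?_
  have := congrArg (fun D : Derivation K 𝔽 𝔽 => D (algebraMap (MvPolynomial (Fin m) K) 𝔽 (X i)))
    hc
  simpa [Derivation.sum_apply, pderiv_X, Pi.single_apply] using this

theorem span_range_slToDerivation :
    Submodule.span 𝔽 (Set.range (slToDerivation K m)) =
      Submodule.span 𝔽 (Set.range fun j : Fin m =>
        Derivation.extendLieHom 𝔽 (pderiv j : Derivation K (MvPolynomial (Fin m) K) _)) := by
  refine le_antisymm (Submodule.span_le.mpr ?_) (Submodule.span_le.mpr ?_)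
  · rintro _ ⟨A, rfl⟩
    change Derivation.extendLieHom 𝔽 (projectiveDerivation A.1) ∈ _
    rw [derivation_eq_sum_smul_pderiv (projectiveDerivation A.1), map_sum]
    refine Submodule.sum_mem _ fun j _ => ?_
    rw [Derivation.extendLieHom_smul]
    exact Submodule.smul_mem _ _ (Submodule.subset_span ⟨j, rfl⟩)
  · rintro _ ⟨i, rfl⟩
    refine Submodule.subset_span ⟨⟨single i.succ 0 (-1),
      LinearMap.mem_ker.mpr (trace_single_eq_of_ne _ _ _ (Fin.succ_ne_zero i))⟩, ?_⟩
    show Derivation.extendLieHom 𝔽 (projectiveDerivation (single i.succ 0 (-1))) = _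
    rw [projectiveDerivation_single_succ_zero]

theorem finrank_span_range_slToDerivation :
    Module.finrank 𝔽 (Submodule.span 𝔽 (Set.range (slToDerivation K m))) = m := by
  rw [span_range_slToDerivation, finrank_span_eq_card (linearIndependent_extendLieHom_pderiv K m),
    Fintype.card_fin]

end FractionField

/-- Let `K` be a field of characteristic `0` and `n ≥ 2`.  Let `F = K(x₁, …, x_{n-1})` be the
field of rational functions in `n - 1` variables over `K`.  Then there exists an injective
homomorphism of Lie algebras over `K` from `sl_n(K)` into `Der_K(F)`, which moreover can be
chosen so that the `F`-linear span of its image in `Der_K(F)` has dimension `n - 1` over `F`. -/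
theorem sl_injection_into_derivations
    (K : Type) [Field K] [CharZero K] (n : ℕ) (hn : 2 ≤ n) :
    ∃ φ : LieAlgebra.SpecialLinear.sl (Fin n) K →ₗ⁅K⁆
        Derivation K (FractionRing (MvPolynomial (Fin (n - 1)) K))
          (FractionRing (MvPolynomial (Fin (n - 1)) K)),
      Function.Injective φ ∧
      Module.finrank (FractionRing (MvPolynomial (Fin (n - 1)) K))
        (Submodule.span (FractionRing (MvPolynomial (Fin (n - 1)) K))
          (Set.range (φ : LieAlgebra.SpecialLinear.sl (Fin n) K →
            Derivation K (FractionRing (MvPolynomial (Fin (n - 1)) K))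
              (FractionRing (MvPolynomial (Fin (n - 1)) K))))) = n - 1 := by
  obtain ⟨m, rfl⟩ : ∃ m, n = m + 1 := ⟨n - 1, by omega⟩
  exact ⟨slToDerivation K m, slToDerivation_injective K m, finrank_span_range_slToDerivation K m⟩
end
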